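/- Let δ > 0 and let σ be a point in the Euclidean plane. Suppose L is a line segment in the plane whose distance to σ is at least δ. Then for each integer k ≥ 0, the length of the intersection of L with the open annulus {z : 2^k δ < |z − σ| < 2^{k+1} δ} is at most 2^{k+2} δ, and consequently ∫_{L ∩ {|z−σ| ≥ δ}} |z − σ|^{−2} ds ≤ 8/δ, where ds is arclength measure along L. -/

import Mathlib

/-!
A subset of a segment is the isometric image of a subset of `ℝ`, so its length is at most its
diameter; hence a segment meets a ball of radius `r` in length at most `2r`. Cutting
`{z | δ ≤ |z - σ|}` into the dyadic annuli `2^k δ ≤ |z - σ| < 2^(k+1) δ`, the `k`-th one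
contributes at most `(2^k δ)⁻² · 2^(k+2) δ = 4 · 2^(-k) / δ`, and the geometric series sums to
`8 / δ`.
-/

open MeasureTheory Metric
open scoped ENNReal

theorem Isometry.hausdorffMeasure_one_le_ediam {X : Type*} [EMetricSpace X] [MeasurableSpace X]
    [BorelSpace X] {f : ℝ → X} (hf : Isometry f) {s : Set X} (hs : s ⊆ Set.range f) :
    μH[1] s ≤ ediam s := by
  rw [← Set.image_preimage_eq_of_subset hs, hf.hausdorffMeasure_image (Or.inl zero_le_one),
    hf.ediam_image, hausdorffMeasure_real]
  exact Real.volume_le_diam _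

theorem exists_isometry_segment_subset_range {E : Type*} [NormedAddCommGroup E]
    [NormedSpace ℝ E] {a b : E} (hab : a ≠ b) :
    ∃ f : ℝ → E, Isometry f ∧ segment ℝ a b ⊆ Set.range f := by
  have hba : ‖b - a‖ ≠ 0 := norm_ne_zero_iff.2 (sub_ne_zero.2 hab.symm)
  have hu : ‖‖b - a‖⁻¹ • (b - a)‖ = 1 := by
    rw [norm_smul, norm_inv, norm_norm, inv_mul_cancel₀ hba]
  refine ⟨fun t => a + t • (‖b - a‖⁻¹ • (b - a)), Isometry.of_dist_eq fun x y => ?_, ?_⟩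
  · rw [dist_add_left, dist_eq_norm, dist_eq_norm, ← sub_smul, norm_smul, hu, mul_one]
  · rw [segment_eq_image']
    rintro _ ⟨θ, -, rfl⟩
    exact ⟨θ * ‖b - a‖, by simp only [smul_smul, mul_assoc, mul_inv_cancel₀ hba, mul_one]⟩

theorem hausdorffMeasure_one_le_ediam_of_subset_segment {E : Type*} [NormedAddCommGroup E]
    [NormedSpace ℝ E] [MeasurableSpace E] [BorelSpace E] {a b : E} {s : Set E}
    (hs : s ⊆ segment ℝ a b) : μH[1] s ≤ ediam s := by
  rcases eq_or_ne a b with rfl | hab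
  · calc μH[1] s ≤ μH[1] (segment ℝ a a) := measure_mono hs
      _ = 0 := by rw [hausdorffMeasure_segment, edist_self]
      _ ≤ ediam s := zero_le
  · obtain ⟨f, hf, hseg⟩ := exists_isometry_segment_subset_range hab
    exact hf.hausdorffMeasure_one_le_ediam (hs.trans hseg)

theorem hausdorffMeasure_segment_inter_ball_le {E : Type*} [NormedAddCommGroup E]
    [NormedSpace ℝ E] [MeasurableSpace E] [BorelSpace E] (a b c : E) (r : ℝ) :
    μH[1] (segment ℝ a b ∩ ball c r) ≤ ENNReal.ofReal (2 * r) :=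
  (hausdorffMeasure_one_le_ediam_of_subset_segment Set.inter_subset_left).trans <|
    ediam_le_of_forall_dist_le fun x hx y hy =>
      (dist_triangle_right x y c).trans (by linarith [mem_ball.1 hx.2, mem_ball.1 hy.2])

section DyadicAnnulus

variable {X : Type*} [PseudoMetricSpace X]

def dyadicAnnulus (σ : X) (δ : ℝ) (k : ℕ) : Set X :=
  {z | 2 ^ k * δ ≤ dist z σ ∧ dist z σ < 2 ^ (k + 1) * δ}

theorem dyadicAnnulus_subset_ball (σ : X) (δ : ℝ) (k : ℕ) :
    dyadicAnnulus σ δ k ⊆ ball σ (2 ^ (k + 1) * δ) :=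
  fun _ hz => hz.2

theorem iUnion_dyadicAnnulus (σ : X) {δ : ℝ} (hδ : 0 < δ) :
    ⋃ k, dyadicAnnulus σ δ k = {z | δ ≤ dist z σ} := by
  ext z
  simp only [Set.mem_iUnion, dyadicAnnulus, Set.mem_ofPred_eq]
  constructor
  · rintro ⟨k, hk, -⟩
    exact le_trans (le_mul_of_one_le_left hδ.le (one_le_pow₀ one_le_two)) hk
  · intro hz
    obtain ⟨k, hk, hk'⟩ := exists_nat_pow_near ((one_le_div hδ).2 hz) one_lt_two
    exact ⟨k, (le_div_iff₀ hδ).1 hk, (div_lt_iff₀ hδ).1 hk'⟩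

variable [MeasurableSpace X]

theorem setLIntegral_inv_dist_sq_dyadicAnnulus_le {μ : Measure X} {s : Set X} {σ : X}
    {δ C : ℝ} (hδ : 0 < δ) (hball : ∀ r, μ (s ∩ ball σ r) ≤ ENNReal.ofReal (C * r)) (k : ℕ) :
    ∫⁻ z in s ∩ dyadicAnnulus σ δ k, ENNReal.ofReal (dist z σ ^ 2)⁻¹ ∂μ
      ≤ ENNReal.ofReal (2 * C / δ * (1 / 2) ^ k) := by
  have hρ : 0 < 2 ^ k * δ := by positivity
  calc ∫⁻ z in s ∩ dyadicAnnulus σ δ k, ENNReal.ofReal (dist z σ ^ 2)⁻¹ ∂μ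
      ≤ ∫⁻ _ in s ∩ dyadicAnnulus σ δ k, ENNReal.ofReal ((2 ^ k * δ) ^ 2)⁻¹ ∂μ :=
        setLIntegral_mono measurable_const fun z hz => ENNReal.ofReal_le_ofReal <|
          inv_anti₀ (by positivity) (pow_le_pow_left₀ hρ.le hz.2.1 2)
    _ = ENNReal.ofReal ((2 ^ k * δ) ^ 2)⁻¹ * μ (s ∩ dyadicAnnulus σ δ k) :=
        setLIntegral_const _ _
    _ ≤ ENNReal.ofReal ((2 ^ k * δ) ^ 2)⁻¹ * ENNReal.ofReal (C * (2 ^ (k + 1) * δ)) := by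
        gcongr
        exact (measure_mono (Set.inter_subset_inter_right s
          (dyadicAnnulus_subset_ball σ δ k))).trans (hball _)
    _ = ENNReal.ofReal (2 * C / δ * (1 / 2) ^ k) := by
        rw [← ENNReal.ofReal_mul (by positivity)]
        congr 1
        rw [one_div, inv_pow]
        field_simp
        ring

theorem setLIntegral_inv_dist_sq_le_of_measure_inter_ball_le {μ : Measure X} {s : Set X}
    {σ : X} {δ C : ℝ} (hδ : 0 < δ) (hball : ∀ r, μ (s ∩ ball σ r) ≤ ENNReal.ofReal (C * r)) :
    ∫⁻ z in s ∩ {z | δ ≤ dist z σ}, ENNReal.ofReal (dist z σ ^ 2)⁻¹ ∂μ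
      ≤ ENNReal.ofReal (4 * C / δ) := by
  calc ∫⁻ z in s ∩ {z | δ ≤ dist z σ}, ENNReal.ofReal (dist z σ ^ 2)⁻¹ ∂μ
      = ∫⁻ z in ⋃ k, s ∩ dyadicAnnulus σ δ k, ENNReal.ofReal (dist z σ ^ 2)⁻¹ ∂μ := by
        rw [← Set.inter_iUnion, iUnion_dyadicAnnulus σ hδ]
    _ ≤ ∑' k, ∫⁻ z in s ∩ dyadicAnnulus σ δ k, ENNReal.ofReal (dist z σ ^ 2)⁻¹ ∂μ :=
        lintegral_iUnion_le _ _
    _ ≤ ∑' k : ℕ, ENNReal.ofReal (2 * C / δ * (1 / 2) ^ k) :=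
        ENNReal.tsum_le_tsum (setLIntegral_inv_dist_sq_dyadicAnnulus_le hδ hball)
    _ = ENNReal.ofReal (4 * C / δ) := by
        have half : ENNReal.ofReal (1 / 2) = 2⁻¹ := by
          rw [one_div, ENNReal.ofReal_inv_of_pos two_pos, ENNReal.ofReal_ofNat]
        simp_rw [ENNReal.ofReal_mul' (pow_nonneg (one_div_nonneg.2 zero_le_two) _),
          ENNReal.ofReal_pow (one_div_nonneg.2 zero_le_two), half, ENNReal.tsum_mul_left,
          ENNReal.tsum_geometric, ENNReal.one_sub_inv_two, inv_inv]
        rw [← ENNReal.ofReal_ofNat 2, ← ENNReal.ofReal_mul' zero_le_two]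
        ring_nf

end DyadicAnnulus

theorem segment_annulus_length_and_integral_bound_general
    (δ : ℝ) (hδ : 0 < δ) (σ a b : EuclideanSpace ℝ (Fin 2)) :
    (∀ k : ℕ,
      μH[1] (segment ℝ a b ∩ {z | 2 ^ k * δ < dist z σ ∧ dist z σ < 2 ^ (k + 1) * δ})
        ≤ ENNReal.ofReal (2 ^ (k + 2) * δ)) ∧
    (∫⁻ z in segment ℝ a b ∩ {z | δ ≤ dist z σ},
        ENNReal.ofReal ((dist z σ) ^ 2)⁻¹ ∂μH[1])
      ≤ ENNReal.ofReal (8 / δ) := by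
  have hball (r : ℝ) := hausdorffMeasure_segment_inter_ball_le a b σ r
  refine ⟨fun k => ?_, ?_⟩
  · calc μH[1] (segment ℝ a b ∩ {z | 2 ^ k * δ < dist z σ ∧ dist z σ < 2 ^ (k + 1) * δ})
        ≤ μH[1] (segment ℝ a b ∩ ball σ (2 ^ (k + 1) * δ)) :=
          measure_mono (Set.inter_subset_inter_right _ fun _ hz => hz.2)
      _ ≤ ENNReal.ofReal (2 ^ (k + 2) * δ) := (hball _).trans_eq (by ring_nf)
  · calc _ ≤ ENNReal.ofReal (4 * 2 / δ) :=
          setLIntegral_inv_dist_sq_le_of_measure_inter_ball_le hδ hball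
      _ = ENNReal.ofReal (8 / δ) := by norm_num

theorem segment_annulus_length_and_integral_bound
    (δ : ℝ) (hδ : 0 < δ) (σ a b : EuclideanSpace ℝ (Fin 2))
    (hdist : ∀ z ∈ segment ℝ a b, δ ≤ dist z σ) :
    (∀ k : ℕ,
      μH[1] (segment ℝ a b ∩ {z | 2 ^ k * δ < dist z σ ∧ dist z σ < 2 ^ (k + 1) * δ})
        ≤ ENNReal.ofReal (2 ^ (k + 2) * δ)) ∧
    (∫⁻ z in segment ℝ a b ∩ {z | δ ≤ dist z σ},
        ENNReal.ofReal ((dist z σ) ^ 2)⁻¹ ∂μH[1])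
      ≤ ENNReal.ofReal (8 / δ) :=
  segment_annulus_length_and_integral_bound_general δ hδ σ a b
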